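/- arXiv:1607.08704 — 2 statements merged into one kernel-verified Lean document; each statement's English description precedes it below -/
import Mathlib

section
/- For a matrix X in the symplectic group Sp(2n) (with coordinates indexed -n,...,-1,1,...,n and symplectic form ∑_{i=1}^n dx_{-i} ∧ dx_i), the minor of X with rows -n,...,-1 and columns -n,...,-3,-2,2 equals the negative of the minor with rows -n,...,-1 and columns -n,...,-3,-1,1. -/
/-!
Let `S` be the columns `-n, …, -3` of the top half `T` of `X` (rows `-n, …, -1`), and consider
`F(u, v) = det [S | u | v]`, an alternating bilinear form in the two free columns. Since `X` is
symplectic, the rows of `T` span an isotropic subspace, i.e. `∑ₖ T_{a,-k} T_{b,k}` is symmetric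
in `a, b`; hence `∑ₖ F(T_{·,-k}, T_{·,k})` pairs an antisymmetric matrix with a symmetric one and
vanishes. For `k ≥ 3` the column `-k` already lies in `S`, so only `k = 1, 2` survive, and these
are the two minors of the statement.
-/

open Matrix

abbrev Idx (n : ℕ) := Fin n ⊕ Fin n

/-- The matrix of the symplectic form ∑_{i=1}^n dx_{-i} ∧ dx_i :
`Sum.inl a` encodes the index `-(a+1)`, `Sum.inr a` encodes `a+1`. -/
def symJ (n : ℕ) : Matrix (Idx n) (Idx n) ℂ :=
  fun i j => match i, j with
  | Sum.inl a, Sum.inr b => if a = b then 1 else 0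
  | Sum.inr a, Sum.inl b => if a = b then -1 else 0
  | _, _ => 0

theorem LinearMap.IsAlt.sum_apply_eq_zero {R ι κ : Type*} [CommRing R] [Fintype ι]
    [DecidableEq ι] [Fintype κ] {B : (ι → R) →ₗ[R] (ι → R) →ₗ[R] R} (hB : B.IsAlt)
    (u v : κ → ι → R) (huv : ∀ p q, ∑ k, u k p * v k q = ∑ k, u k q * v k p) :
    ∑ k, B (u k) (v k) = 0 := by
  have hdiag (p : ι) : toMatrix₂' R B p p = 0 := by
    rw [LinearMap.toMatrix₂'_apply, hB.self_eq_zero]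
  have hskew (p q : ι) : toMatrix₂' R B q p = -toMatrix₂' R B p q := by
    rw [LinearMap.toMatrix₂'_apply, LinearMap.toMatrix₂'_apply, hB.neg]
  calc ∑ k, B (u k) (v k)
      = ∑ pq : ι × ι, toMatrix₂' R B pq.1 pq.2 * ∑ k, u k pq.1 * v k pq.2 := by
        rw [← Matrix.toLinearMap₂'_toMatrix' (R := R) B]
        simp only [Matrix.toLinearMap₂'_apply, smul_eq_mul, Fintype.sum_prod_type,
          Finset.mul_sum, LinearMap.toMatrix'_toLinearMap₂']
        rw [Finset.sum_comm]
        refine Finset.sum_congr rfl fun p _ => ?_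
        rw [Finset.sum_comm]
        refine Finset.sum_congr rfl fun q _ => Finset.sum_congr rfl fun k _ => ?_
        ring
    _ = 0 := by
        -- `(p, q) ↦ (q, p)` cancels the off-diagonal terms; the diagonal ones vanish.
        refine Finset.sum_ninvolution Prod.swap (fun pq => ?_) (fun pq h hfix => h ?_)
          (fun _ => Finset.mem_univ _) (fun _ => rfl)
        · rw [Prod.fst_swap, Prod.snd_swap, hskew, huv]; ring
        · rw [show pq.1 = pq.2 from congrArg Prod.snd hfix, hdiag, zero_mul]

namespace AlternatingMap

open Function

variable {R M N κ : Type*} [CommRing R] [AddCommGroup M] [Module R M] [AddCommGroup N]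
  [Module R N] [DecidableEq κ]

def bilinAt (f : M [⋀^κ]→ₗ[R] N) (w : κ → M) {i j : κ} (hij : i ≠ j) : M →ₗ[R] M →ₗ[R] N :=
  LinearMap.mk₂ R (fun x y => f (update (update w i x) j y))
    (fun x x' y => by simp only [update_comm hij _ y w, f.map_update_add])
    (fun c x y => by simp only [update_comm hij _ y w, f.map_update_smul])
    (fun x y y' => f.map_update_add _ j y y')
    (fun c x y => f.map_update_smul _ j c y)

theorem bilinAt_isAlt (f : M [⋀^κ]→ₗ[R] N) (w : κ → M) {i j : κ} (hij : i ≠ j) :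
    (f.bilinAt w hij).IsAlt := fun x =>
  f.map_eq_zero_of_eq _ (by simp [update_of_ne hij]) hij

theorem sum_map_update_update_eq_zero {ι κ' : Type*} [Fintype ι] [DecidableEq ι] [Fintype κ']
    (f : (ι → R) [⋀^κ]→ₗ[R] R) (w : κ → ι → R) {i j : κ} (hij : i ≠ j)
    (u v : κ' → ι → R) (huv : ∀ p q, ∑ k, u k p * v k q = ∑ k, u k q * v k p) :
    ∑ k, f (update (update w i (u k)) j (v k)) = 0 :=
  (f.bilinAt_isAlt w hij).sum_apply_eq_zero u v huv

end AlternatingMap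

namespace Matrix

variable {R ι κ m : Type*} [CommRing R] [Fintype κ] [DecidableEq κ]
  (X : Matrix m (ι ⊕ ι) R) (r : κ → m) (c : κ → ι ⊕ ι) {i j : κ}

open Function

theorem sum_det_submatrix_update_inl_inr_eq_zero [Fintype ι] [DecidableEq ι] (hij : i ≠ j)
    (hX : ∀ a b, ∑ k, X (r a) (.inl k) * X (r b) (.inr k)
      = ∑ k, X (r b) (.inl k) * X (r a) (.inr k)) :
    ∑ k, (X.submatrix r (update (update c i (.inl k)) j (.inr k))).det = 0 := by
  have hdet (k : ι) : (X.submatrix r (update (update c i (.inl k)) j (.inr k))).det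
      = detRowAlternating (update (update (fun t p => X (r p) (c t)) i
          (fun p => X (r p) (.inl k))) j (fun p => X (r p) (.inr k))) := by
    rw [← det_transpose]
    congr 1
    ext t p
    simp only [transpose_apply, submatrix_apply, update_apply]
    split_ifs <;> rfl
  simp_rw [hdet]
  exact detRowAlternating.sum_map_update_update_eq_zero _ hij _ _ fun p q => hX p q

theorem det_submatrix_update_eq_zero_of_apply_eq {t : κ} {x y : ι ⊕ ι} (hti : t ≠ i)
    (htj : t ≠ j) (hij : i ≠ j) (hct : c t = x) :
    (X.submatrix r (update (update c i x) j y)).det = 0 :=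
  det_zero_of_column_eq hti fun p => by
    simp [update_of_ne htj, update_of_ne hti, hct, update_of_ne hij]

end Matrix

theorem Matrix.sum_inl_mul_inr_symm_of_mem_symplecticGroup {l R : Type*} [DecidableEq l]
    [Fintype l] [CommRing R] {X : Matrix (l ⊕ l) (l ⊕ l) R} (hX : X ∈ symplecticGroup l R)
    (a b : l) :
    ∑ k, X (.inl a) (.inl k) * X (.inl b) (.inr k)
      = ∑ k, X (.inl b) (.inl k) * X (.inl a) (.inr k) := by
  have h := congrFun₂ (SymplecticGroup.mem_iff.mp hX) (.inl a) (.inl b)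
  simp [J, mul_apply, Fintype.sum_sum_type, one_apply] at h
  simp only [mul_comm (X (.inl a) (.inr _))] at h
  linear_combination -h

theorem symJ_eq_neg_J (n : ℕ) : symJ n = -J (Fin n) ℂ := by
  ext (a | a) (b | b) <;> simp [symJ, J, one_apply, apply_ite]

theorem mem_symplecticGroup_of_transpose_mul_symJ_mul {n : ℕ} {X : Matrix (Idx n) (Idx n) ℂ}
    (hX : Xᵀ * symJ n * X = symJ n) : X ∈ symplecticGroup (Fin n) ℂ := by
  rw [SymplecticGroup.mem_iff']
  simpa [symJ_eq_neg_J] using hX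

open Function in
/-- For `X ∈ Sp(2n)`, the minor with rows `-n,...,-1` and columns `-n,...,-3,-2,2`
equals the negative of the minor with rows `-n,...,-1` and columns `-n,...,-3,-1,1`. -/
theorem stmt1 (n : ℕ) (hn : 2 ≤ n) (X : Matrix (Idx n) (Idx n) ℂ)
    (hX : Xᵀ * symJ n * X = symJ n) :
    (X.submatrix
        (fun r : Fin n => (Sum.inl ⟨n - 1 - r.1, by have := r.2; omega⟩ : Idx n))
        (fun c : Fin n =>
          if c.1 < n - 1 then (Sum.inl ⟨n - 1 - c.1, by have := c.2; omega⟩ : Idx n)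
          else Sum.inr ⟨1, by omega⟩)).det
    = - (X.submatrix
        (fun r : Fin n => (Sum.inl ⟨n - 1 - r.1, by have := r.2; omega⟩ : Idx n))
        (fun c : Fin n =>
          if c.1 < n - 2 then (Sum.inl ⟨n - 1 - c.1, by have := c.2; omega⟩ : Idx n)
          else if c.1 = n - 2 then Sum.inl ⟨0, by omega⟩
          else Sum.inr ⟨0, by omega⟩)).det := by
  let rev : Fin n → Idx n := fun t => .inl ⟨n - 1 - t.1, by omega⟩
  let i : Fin n := ⟨n - 2, by omega⟩
  let j : Fin n := ⟨n - 1, by omega⟩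
  have hij : i ≠ j := by simp [i, j, Fin.ext_iff]; omega
  have hcols₁ : (fun c : Fin n =>
      if c.1 < n - 1 then (Sum.inl ⟨n - 1 - c.1, by omega⟩ : Idx n) else Sum.inr ⟨1, by omega⟩)
      = update (update rev i (.inl ⟨1, by omega⟩)) j (.inr ⟨1, by omega⟩) := by
    funext t
    simp only [update_apply, rev, i, j, Fin.ext_iff]
    split_ifs <;> first | rfl | omega | (congr 2; omega)
  have hcols₀ : (fun c : Fin n =>
      if c.1 < n - 2 then (Sum.inl ⟨n - 1 - c.1, by omega⟩ : Idx n)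
      else if c.1 = n - 2 then Sum.inl ⟨0, by omega⟩ else Sum.inr ⟨0, by omega⟩)
      = update (update rev i (.inl ⟨0, by omega⟩)) j (.inr ⟨0, by omega⟩) := by
    funext t
    simp only [update_apply, rev, i, j, Fin.ext_iff]
    split_ifs <;> first | rfl | omega
  have hsum := X.sum_det_submatrix_update_inl_inr_eq_zero rev rev hij fun a b =>
    sum_inl_mul_inr_symm_of_mem_symplecticGroup
      (mem_symplecticGroup_of_transpose_mul_symJ_mul hX) _ _
  -- For `k ≥ 2` the column `-(k+1)` already occurs among the fixed columns `rev`.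
  have hrest (k : Fin n) (hk : k ≠ ⟨0, by omega⟩ ∧ k ≠ ⟨1, by omega⟩) :
      (X.submatrix rev (update (update rev i (.inl k)) j (.inr k))).det = 0 := by
    simp only [ne_eq, Fin.ext_iff] at hk
    refine X.det_submatrix_update_eq_zero_of_apply_eq rev rev (t := ⟨n - 1 - k.1, by omega⟩)
      ?_ ?_ hij ?_ <;> simp only [i, j, rev, ne_eq, Sum.inl.injEq, Fin.ext_iff] <;> omega
  rw [Fintype.sum_eq_add _ _ (by simp [Fin.ext_iff]) hrest] at hsum
  rw [hcols₁, hcols₀]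
  linear_combination hsum
end

section
/- Let x_i^j (i,j ∈ {-n,...,n}) be commuting variables, F_{i,j} = ∑_k ( x_i^k ∂/∂x_j^k - sign(i)·sign(j)·x_{-j}^k ∂/∂x_{-i}^k ) the realization of sp(2n) on polynomials, and for k ≤ n define the determinant a_{-n,...,-k} = det( x_i^j ) with rows i = -n,...,-k and columns j = -n,...,-n+(n-k). Then the polynomial v = ∏_{k=1}^{n} (a_{-n,...,-k})^{m_{-k} - m_{-k+1}} (with m_0 := 0) is a highest weight vector: F_{i,j} v = 0 for all i < j, and F_{-i,-i} v = m_{-i} v for i = 1,...,n. -/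
open MvPolynomial

def negIdx {n : ℕ} : Idx n → Idx n := Sum.swap

def sgn {n : ℕ} : Idx n → ℂ := Sum.elim (fun _ => -1) (fun _ => 1)

/-- The integer value of an index: `Sum.inl a ↦ -(a+1)`, `Sum.inr a ↦ a+1`. -/
def idxVal {n : ℕ} : Idx n → ℤ :=
  Sum.elim (fun a => -(a.1 + 1 : ℤ)) (fun a => (a.1 + 1 : ℤ))

abbrev PolRing (n : ℕ) := MvPolynomial (Idx n × Idx n) ℂ

/-- The realization of `F_{i,j}` as a differential operator
`∑_k ( x_i^k ∂/∂x_j^k - sign(i) sign(j) x_{-j}^k ∂/∂x_{-i}^k )`. -/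
noncomputable def Fop {n : ℕ} (i j : Idx n) : Module.End ℂ (PolRing n) :=
  ∑ k : Idx n,
    (LinearMap.mulLeft ℂ (X (i, k)) * (pderiv (j, k)).toLinearMap
      - (sgn i * sgn j) •
        (LinearMap.mulLeft ℂ (X (negIdx j, k)) * (pderiv (negIdx i, k)).toLinearMap))

/-- The determinant `a_{-n,...,-k}` with rows `-n,...,-k` and columns `-n,...,-k`. -/
noncomputable def dmin (n k : ℕ) (hn : 1 ≤ n) : PolRing n :=
  (Matrix.of fun r c : Fin (n + 1 - k) =>
    (X ((Sum.inl ⟨n - 1 - r.1, by omega⟩ : Idx n),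
        (Sum.inl ⟨n - 1 - c.1, by omega⟩ : Idx n)) : PolRing n)).det

/-!
Each `F_{i,j}` is a derivation, namely `E_{i,j} - sign(i) sign(j) E_{-j,-i}`, where the
polarization operator `E_{i,j} = ∑_k x_i^k ∂/∂x_j^k` acting on a minor of the matrix `(x_p^s)`
replaces its row `j` by row `i`. The rows `-n, …, -k` of `a_{-n,…,-k}` form an initial segment of
the index order, so for `i < j` either `j` is not a row, or `i` is a row too and the new minor has
two equal rows; the same holds for `-j < -i`. Hence the positive root vectors kill every
`a_{-n,…,-k}`, while `F_{-a,-a}` multiplies it by `1` or `0` according as `-a` is a row or not.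
A derivation acts on a product of powers of such eigenvectors by the weighted sum of the
eigenvalues, which telescopes to `m_{-a}`.
-/

open Finset

namespace Derivation

section

variable {R A M : Type*} [CommSemiring R] [CommSemiring A] [Algebra R A]
  [AddCommMonoid M] [Module A M] [Module R M]

theorem finsetSum_apply {ι : Type*} (s : Finset ι) (D : ι → Derivation R A M) (a : A) :
    (∑ x ∈ s, D x) a = ∑ x ∈ s, D x a := by
  rw [← coeFnAddMonoidHom_apply, map_sum, Finset.sum_apply]
  rfl

theorem leibniz_prod {ι : Type*} [DecidableEq ι] (D : Derivation R A M) (s : Finset ι)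
    (f : ι → A) : D (∏ x ∈ s, f x) = ∑ x ∈ s, (∏ y ∈ s.erase x, f y) • D (f x) := by
  induction s using Finset.induction_on with
  | empty => simp
  | insert a s ha ih =>
    rw [prod_insert ha, leibniz, ih, sum_insert ha, erase_insert ha, smul_sum, add_comm]
    congr 1
    refine sum_congr rfl fun x hx => ?_
    rw [smul_smul, erase_insert_of_ne (ne_of_mem_of_not_mem hx ha).symm,
      prod_insert fun h => ha (mem_of_mem_erase h)]

end

section

variable {R A : Type*} [CommRing R] [CommRing A] [Algebra R A]

theorem map_det_eq_sum_updateCol {N : Type*} [Fintype N] [DecidableEq N]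
    (D : Derivation R A A) (M : Matrix N N A) :
    D M.det = ∑ c, (M.updateCol c fun r => D (M r c)).det := by
  simp only [Matrix.det_apply, map_sum, Units.smul_def, map_zsmul, leibniz_prod, smul_sum]
  rw [sum_comm]
  refine sum_congr rfl fun c _ => sum_congr rfl fun σ _ => ?_
  rw [← mul_prod_erase _ _ (mem_univ c), Matrix.updateCol_self, smul_eq_mul, mul_comm]
  congr 2
  exact prod_congr rfl fun i hi => (Matrix.updateCol_ne (ne_of_mem_erase hi)).symm

theorem map_det {N : Type*} [Fintype N] [DecidableEq N]
    (D : Derivation R A A) (M : Matrix N N A) :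
    D M.det = ∑ r, (M.updateRow r fun c => D (M r c)).det := by
  rw [← Matrix.det_transpose, map_det_eq_sum_updateCol]
  simp only [Matrix.transpose_apply, Matrix.updateCol_transpose, Matrix.det_transpose]

end

section

variable {R A : Type*} [CommSemiring R] [CommSemiring A] [Algebra R A]
  (D : Derivation R A A)

theorem map_pow_of_eq_smul {a : A} {c : R} (h : D a = c • a) (e : ℕ) :
    D (a ^ e) = (e * c) • a ^ e := by
  cases e with
  | zero => simp
  | succ k =>
    rw [leibniz_pow, h, Nat.add_sub_cancel, smul_comm (a ^ k) c a, smul_eq_mul, ← pow_succ,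
      ← Nat.cast_smul_eq_nsmul R, smul_smul]

theorem map_prod_of_eq_smul {ι : Type*} {s : Finset ι} {f : ι → A} {c : ι → R}
    (h : ∀ k ∈ s, D (f k) = c k • f k) : D (∏ k ∈ s, f k) = (∑ k ∈ s, c k) • ∏ k ∈ s, f k := by
  classical
  induction s using Finset.induction_on with
  | empty => simp
  | insert a s ha ih =>
    rw [prod_insert ha, sum_insert ha, leibniz, ih fun k hk => h k (mem_insert_of_mem hk),
      h a (mem_insert_self a s)]
    simp only [Algebra.smul_def, Algebra.algebraMap_self, RingHom.id_apply, map_add]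
    ring

end

end Derivation

section Polarization

variable {R ι κ N : Type*} [CommRing R] [Fintype κ] [Fintype N] [DecidableEq N]

noncomputable def polarization (i j : ι) :
    Derivation R (MvPolynomial (ι × κ) R) (MvPolynomial (ι × κ) R) :=
  ∑ k, (X (i, k) : MvPolynomial (ι × κ) R) • pderiv (j, k)

theorem polarization_apply (i j : ι) (p : MvPolynomial (ι × κ) R) :
    polarization i j p = ∑ k, X (i, k) * pderiv (j, k) p := by
  simp only [polarization, Derivation.finsetSum_apply, Derivation.smul_apply, smul_eq_mul]

theorem polarization_X [DecidableEq ι] (i j p : ι) (s : κ) :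
    polarization i j (X (p, s) : MvPolynomial (ι × κ) R) = if p = j then X (i, s) else 0 := by
  classical
  by_cases h : p = j <;> simp [polarization_apply, pderiv_X, Pi.single_apply, h]

noncomputable def minorDet (ρ : N → ι) (γ : N → κ) : MvPolynomial (ι × κ) R :=
  (Matrix.of fun r c => X (ρ r, γ c)).det

theorem polarization_minorDet [DecidableEq ι] (i j : ι) (ρ : N → ι) (γ : N → κ) :
    polarization i j (minorDet (R := R) ρ γ)
      = ∑ r with ρ r = j, minorDet (Function.update ρ r i) γ := by
  rw [minorDet, Derivation.map_det, sum_filter]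
  refine sum_congr rfl fun r _ => ?_
  by_cases h : ρ r = j
  · simp only [Matrix.of_apply, polarization_X, h, if_true]
    congr 1
    ext r' c
    by_cases hr : r' = r <;> simp [Matrix.updateRow_apply, Function.update_apply, hr]
  · simp only [Matrix.of_apply, polarization_X, h, if_false]
    exact Matrix.det_eq_zero_of_row_eq_zero r fun c => by simp

omit [Fintype κ] in
theorem minorDet_eq_zero_of_apply_eq {ρ : N → ι} {r r' : N} (hne : r ≠ r') (h : ρ r = ρ r')
    (γ : N → κ) : minorDet (R := R) ρ γ = 0 :=
  Matrix.det_zero_of_row_eq hne (funext fun c => by simp [h])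

theorem polarization_minorDet_eq_zero [DecidableEq ι] {i j : ι} {ρ : N → ι} (hij : i ≠ j)
    (h : j ∈ Set.range ρ → i ∈ Set.range ρ) (γ : N → κ) :
    polarization i j (minorDet (R := R) ρ γ) = 0 := by
  rw [polarization_minorDet]
  refine sum_eq_zero fun r hr => ?_
  have hρr : ρ r = j := (mem_filter.1 hr).2
  obtain ⟨r', hρr'⟩ := h ⟨r, hρr⟩
  have hne : r ≠ r' := by rintro rfl; exact hij (hρr'.symm.trans hρr)
  exact minorDet_eq_zero_of_apply_eq hne (by simp [hne.symm, hρr']) γ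

theorem polarization_self_minorDet [DecidableEq ι] {ρ : N → ι} (hρ : ρ.Injective) (i : ι)
    (γ : N → κ) :
    polarization i i (minorDet (R := R) ρ γ)
      = (if i ∈ Set.range ρ then 1 else 0 : R) • minorDet ρ γ := by
  rw [polarization_minorDet,
    sum_congr rfl fun r hr => by rw [← (mem_filter.1 hr).2, Function.update_eq_self], sum_const]
  split_ifs with hi
  · obtain ⟨r, rfl⟩ := hi
    simp [hρ.eq_iff, filter_eq']
  · simp_all

end Polarization

theorem sum_Icc_tsub_eq {m : ℕ → ℕ} (h0 : m 0 = 0) {N : ℕ} (hm : ∀ k < N, m k ≤ m (k + 1)) :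
    ∑ k ∈ Icc 1 N, (m k - m (k - 1)) = m N := by
  induction N with
  | zero => simpa using h0.symm
  | succ N ih =>
    rw [sum_Icc_succ_top (by omega), ih fun k hk => hm k (by omega), Nat.add_sub_cancel]
    have := hm N (by omega)
    omega

def dminIdx (n k : ℕ) (hn : 1 ≤ n) (r : Fin (n + 1 - k)) : Idx n :=
  Sum.inl ⟨n - 1 - r.1, by omega⟩

theorem dmin_eq_minorDet (n k : ℕ) (hn : 1 ≤ n) :
    dmin n k hn = minorDet (dminIdx n k hn) (dminIdx n k hn) := rfl

theorem mem_range_dminIdx {n k : ℕ} (hn : 1 ≤ n) {p : Idx n} :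
    p ∈ Set.range (dminIdx n k hn) ↔ idxVal p ≤ -k := by
  rcases p with ⟨t, ht⟩ | ⟨t, ht⟩
  · simp only [Set.mem_range, dminIdx, idxVal, Sum.elim_inl, Sum.inl.injEq, Fin.ext_iff]
    constructor
    · rintro ⟨r, hr⟩
      have := r.2
      omega
    · intro h
      exact ⟨⟨n - 1 - t, by omega⟩, by simp only; omega⟩
  · simp [dminIdx, idxVal]

theorem dminIdx_injective {n k : ℕ} (hn : 1 ≤ n) (hk : 1 ≤ k) :
    (dminIdx n k hn).Injective := by
  intro r r' h
  simp only [dminIdx, Sum.inl.injEq, Fin.ext_iff] at h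
  have := r.2
  have := r'.2
  omega

theorem idxVal_negIdx {n : ℕ} (p : Idx n) : idxVal (negIdx p) = -idxVal p := by
  cases p <;> simp [idxVal, negIdx]

noncomputable def FopDerivation {n : ℕ} (i j : Idx n) : Derivation ℂ (PolRing n) (PolRing n) :=
  polarization i j - (sgn i * sgn j) • polarization (negIdx j) (negIdx i)

theorem Fop_apply {n : ℕ} (i j : Idx n) (p : PolRing n) : Fop i j p = FopDerivation i j p := by
  simp [Fop, FopDerivation, polarization_apply, LinearMap.sum_apply, smul_sum]

theorem FopDerivation_dmin_of_lt {n : ℕ} (hn : 1 ≤ n) {i j : Idx n} (hij : idxVal i < idxVal j)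
    (k : ℕ) : FopDerivation i j (dmin n k hn) = 0 := by
  have hne : ∀ {p q : Idx n}, idxVal p < idxVal q → p ≠ q := fun h he => h.ne (by rw [he])
  rw [FopDerivation, Derivation.sub_apply, Derivation.smul_apply, dmin_eq_minorDet,
    polarization_minorDet_eq_zero (hne hij), polarization_minorDet_eq_zero, smul_zero, sub_zero]
  · exact hne (by rw [idxVal_negIdx, idxVal_negIdx]; omega)
  · simp only [mem_range_dminIdx, idxVal_negIdx]; omega
  · simp only [mem_range_dminIdx]; omega

theorem FopDerivation_inl_self_dmin {n k : ℕ} (hn : 1 ≤ n) (hk : 1 ≤ k) (a : Fin n) :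
    FopDerivation (Sum.inl a) (Sum.inl a) (dmin n k hn)
      = (if k ≤ a.1 + 1 then 1 else 0 : ℂ) • dmin n k hn := by
  have hmem : Sum.inl a ∈ Set.range (dminIdx n k hn) ↔ k ≤ a.1 + 1 := by
    rw [mem_range_dminIdx]
    simp [idxVal]
    omega
  have hnotMem : negIdx (Sum.inl a) ∉ Set.range (dminIdx n k hn) := by
    rw [mem_range_dminIdx]
    simp [idxVal, negIdx]
  rw [FopDerivation, Derivation.sub_apply, Derivation.smul_apply, dmin_eq_minorDet,
    polarization_self_minorDet (dminIdx_injective hn hk),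
    polarization_self_minorDet (dminIdx_injective hn hk), if_neg hnotMem, zero_smul, smul_zero,
    sub_zero]
  simp only [hmem]

/-- The polynomial `v = ∏_{k=1}^n (a_{-n,...,-k})^{m_{-k} - m_{-k+1}}` is a highest
weight vector for `sp(2n)`: it is killed by all positive root vectors `F_{i,j}` (`i < j`)
and `F_{-i,-i} v = m_{-i} v`.  Here `m k` stands for `m_{-k}` and `m 0 = 0`,
with `m_{-n} ≥ ... ≥ m_{-1} ≥ 0`. -/
theorem stmt6 (n : ℕ) (hn : 1 ≤ n) (m : ℕ → ℕ) (hm0 : m 0 = 0)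
    (hmono : ∀ k, k < n → m k ≤ m (k + 1))
    (v : PolRing n)
    (hv : v = ∏ k ∈ Finset.Icc 1 n, dmin n k hn ^ (m k - m (k - 1))) :
    (∀ i j : Idx n, idxVal i < idxVal j → Fop i j v = 0) ∧
    (∀ a : Fin n, Fop (Sum.inl a) (Sum.inl a) v = ((m (a.1 + 1) : ℂ)) • v) := by
  subst hv
  refine ⟨fun i j hij => ?_, fun a => ?_⟩
  · have hpow : ∀ k ∈ Icc 1 n,
        FopDerivation i j (dmin n k hn ^ (m k - m (k - 1)))
          = (0 : ℂ) • dmin n k hn ^ (m k - m (k - 1)) := fun k _ => by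
      rw [(FopDerivation i j).map_pow_of_eq_smul (c := 0)
        (by rw [FopDerivation_dmin_of_lt hn hij, zero_smul]), mul_zero]
    rw [Fop_apply, (FopDerivation i j).map_prod_of_eq_smul hpow, sum_const_zero, zero_smul]
  · have hpow : ∀ k ∈ Icc 1 n,
        FopDerivation (Sum.inl a) (Sum.inl a) (dmin n k hn ^ (m k - m (k - 1)))
          = (((m k - m (k - 1) : ℕ) : ℂ) * if k ≤ a.1 + 1 then 1 else 0)
            • dmin n k hn ^ (m k - m (k - 1)) := fun k hk =>
      (FopDerivation _ _).map_pow_of_eq_smul (FopDerivation_inl_self_dmin hn (mem_Icc.1 hk).1 a) _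
    have hfilter : {k ∈ Icc 1 n | k ≤ a.1 + 1} = Icc 1 (a.1 + 1) := by
      ext k
      simp only [mem_filter, mem_Icc]
      omega
    rw [Fop_apply, (FopDerivation _ _).map_prod_of_eq_smul hpow]
    simp only [mul_ite, mul_one, mul_zero]
    rw [← sum_filter, hfilter, ← Nat.cast_sum, sum_Icc_tsub_eq hm0 fun k hk => hmono k (by omega)]
end
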